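/- arXiv:1604.08276 — 3 statements merged into one kernel-verified Lean document; each statement's English description precedes it below -/
import Mathlib

section
/- Let a < b be real numbers, and let f : ℝ → ℂ and φ : ℝ → ℂ be continuous on [a,b]. Suppose that for every t ∈ [a,b) the function f has right derivative φ(t) at t, i.e., lim_{h↓0} (f(t+h) − f(t))/h = φ(t). Then f(t) = f(a) + ∫_a^t φ(s) ds for all t ∈ [a,b]; in particular, f is differentiable on (a,b) with derivative φ. -/
/-- If `f` is continuous on `[a,b]` and has right derivative `φ t` (a continuous
function) at every `t ∈ [a,b)`, then `f t = f a + ∫_a^t φ(s) ds` on `[a,b]`;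
in particular `f` is differentiable on `(a,b)` with derivative `φ`. -/
theorem stmt1 (a b : ℝ) (hab : a < b) (f φ : ℝ → ℂ)
    (hf : ContinuousOn f (Set.Icc a b))
    (hφ : ContinuousOn φ (Set.Icc a b))
    (hd : ∀ t ∈ Set.Ico a b, HasDerivWithinAt f (φ t) (Set.Ici t) t) :
    (∀ t ∈ Set.Icc a b, f t = f a + ∫ s in a..t, φ s) ∧
    (∀ t ∈ Set.Ioo a b, HasDerivAt f (φ t) t) := by
  set g : ℝ → ℂ := fun t => f a + ∫ s in a..t, φ s with hg
  have hIcc : Set.uIcc a b = Set.Icc a b := Set.uIcc_of_le hab.le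
  have hint : ∀ t ∈ Set.Icc a b, IntervalIntegrable φ MeasureTheory.volume a t := fun t ht =>
    ContinuousOn.intervalIntegrable_of_Icc ht.1 (hφ.mono (Set.Icc_subset_Icc le_rfl ht.2))
  have hnhds : ∀ t ∈ Set.Ico a b, Set.Icc a b ∈ nhdsWithin t (Set.Ici t) := fun t ht =>
    mem_nhdsWithin.2 ⟨Set.Iio b, isOpen_Iio, ht.2, fun x hx => ⟨le_trans ht.1 hx.2, hx.1.le⟩⟩
  have hgd : ∀ t ∈ Set.Ico a b, HasDerivWithinAt g (φ t) (Set.Ici t) t := by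
    intro t ht
    have h1 : IntervalIntegrable φ MeasureTheory.volume a t := hint t ⟨ht.1, ht.2.le⟩
    have hmeas : StronglyMeasurableAtFilter φ (nhdsWithin t (Set.Ioi t)) :=
      ⟨Set.Icc a b, nhdsWithin_mono t Set.Ioi_subset_Ici_self (hnhds t ht),
        hφ.aestronglyMeasurable measurableSet_Icc⟩
    have hcont : ContinuousWithinAt φ (Set.Ioi t) t :=
      ((hφ t ⟨ht.1, ht.2.le⟩).mono Set.inter_subset_left).mono_of_mem_nhdsWithin
        (Filter.inter_mem (nhdsWithin_mono t Set.Ioi_subset_Ici_self (hnhds t ht))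
          self_mem_nhdsWithin)
    exact HasDerivWithinAt.const_add (f a)
      (intervalIntegral.integral_hasDerivWithinAt_right h1 hmeas hcont)
  have hgc : ContinuousOn g (Set.Icc a b) := by
    rw [← hIcc]
    exact continuousOn_const.add (intervalIntegral.continuousOn_primitive_interval
      (by rw [hIcc]; exact hφ.integrableOn_Icc : MeasureTheory.IntegrableOn φ (Set.uIcc a b) MeasureTheory.volume))
  have key : ∀ t ∈ Set.Icc a b, f t = g t := by
    refine eq_of_has_deriv_right_eq hd hgd hf hgc ?_
    simp [hg]
  refine ⟨key, fun t ht => ?_⟩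
  have hga : HasDerivAt g (φ t) t := by
    have h1 : IntervalIntegrable φ MeasureTheory.volume a t := hint t ⟨ht.1.le, ht.2.le⟩
    have hmem : Set.Icc a b ∈ nhds t := Icc_mem_nhds ht.1 ht.2
    have hmeas : StronglyMeasurableAtFilter φ (nhds t) :=
      ⟨Set.Icc a b, hmem, hφ.aestronglyMeasurable measurableSet_Icc⟩
    have hcont : ContinuousAt φ t := (hφ t ⟨ht.1.le, ht.2.le⟩).continuousAt hmem
    exact HasDerivAt.const_add (f a)
      (intervalIntegral.integral_hasDerivAt_right h1 hmeas hcont)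
  refine hga.congr_of_eventuallyEq ?_
  filter_upwards [Icc_mem_nhds ht.1 ht.2] with x hx
  exact key x hx
end

section
/- Let U : [0,∞) → ℝ be continuous and let ε > 0, δ > 0. Let z₁ : [0,ε] → ℂ be continuous with z₁(t) ≠ U(t) for all t ∈ [0,ε], such that z₁ has right derivative 2/(z₁(t) − U(t)) at every t ∈ [0,ε). Let w ∈ ℂ with w ≠ z₁(ε), and let z₂ : [0,δ) → ℂ be continuous with z₂(0) = w, z₂(t) ≠ U(t+ε) for all t ∈ [0,δ), such that z₂ has right derivative 2/(z₂(t) − U(t+ε)) at every t ∈ [0,δ). Define z : [0, ε+δ) → ℂ by z(t) = z₁(t) for t ∈ [0,ε) and z(t) = z₂(t−ε) for t ∈ [ε, ε+δ). Then z has right derivative 2/(z(t) − U(t)) at every t ∈ [0, ε+δ), yet z is discontinuous at t = ε (its left limit there is z₁(ε) ≠ w = z(ε)). In particular, the right-derivative form of the chordal Loewner equation does not have a unique solution. -/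
open Filter Topology Set

/-!
A solution of `z' = F(t, z)` in the right-derivative sense only sees the future of each time
`t`, so two such solutions can be concatenated at a time `b` — the first used on `[a, b)`, the
second on `[b, c)` — without any matching condition at `b`. Restarting the Loewner flow at time
`ε` from a point `w ≠ z₁ ε` therefore yields a right-derivative solution with a jump at `ε`.
-/

section RightSolution

variable {E : Type*} [NormedAddCommGroup E] [NormedSpace ℝ E]

theorem HasDerivWithinAt.comp_sub_const {𝕜 F : Type*} [NontriviallyNormedField 𝕜]
    [NormedAddCommGroup F] [NormedSpace 𝕜 F] {f : 𝕜 → F} {f' : F} {s : Set 𝕜} {x : 𝕜}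
    (a : 𝕜) (hf : HasDerivWithinAt f f' s (x - a)) :
    HasDerivWithinAt (fun y ↦ f (y - a)) f' ((· - a) ⁻¹' s) x := by
  simpa [Function.comp_def] using
    hf.scomp x ((hasDerivAt_id x).sub_const a).hasDerivWithinAt (mapsTo_preimage _ s)

def IsRightSolution (F : ℝ → E → E) (z : ℝ → E) (I : Set ℝ) : Prop :=
  ∀ t ∈ I, HasDerivWithinAt z (F t (z t)) (Ici t) t

theorem IsRightSolution.comp_sub_const {F : ℝ → E → E} {z : ℝ → E} {I : Set ℝ} (a : ℝ)
    (hz : IsRightSolution (fun t ↦ F (t + a)) z I) :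
    IsRightSolution F (fun t ↦ z (t - a)) ((· - a) ⁻¹' I) := by
  intro t ht
  have hderiv := (hz (t - a) ht).comp_sub_const a
  simpa only [preimage_sub_const_Ici, sub_add_cancel] using hderiv

theorem IsRightSolution.piecewise {F : ℝ → E → E} {f g : ℝ → E} {a b c : ℝ}
    (hf : IsRightSolution F f (Ico a b)) (hg : IsRightSolution F g (Ico b c)) :
    IsRightSolution F (fun t ↦ if t < b then f t else g t) (Ico a c) := by
  intro t ⟨hat, htc⟩
  rcases lt_or_ge t b with htb | hbt
  · have heq : (fun s ↦ if s < b then f s else g s) =ᶠ[𝓝[Ici t] t] f := by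
      filter_upwards [nhdsWithin_le_nhds (Iio_mem_nhds htb)] with s hs using if_pos hs
    simpa only [if_pos htb] using (hf t ⟨hat, htb⟩).congr_of_eventuallyEq heq (if_pos htb)
  · have heq : (fun s ↦ if s < b then f s else g s) =ᶠ[𝓝[Ici t] t] g := by
      filter_upwards [self_mem_nhdsWithin] with s hs using if_neg (hbt.trans hs).not_gt
    simpa only [if_neg hbt.not_gt] using
      (hg t ⟨hbt, htc⟩).congr_of_eventuallyEq heq (if_neg hbt.not_gt)

end RightSolution

theorem stmt3_general (U : ℝ → ℝ) (ε δ : ℝ) (hε : 0 < ε) (hδ : 0 < δ)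
    (z₁ : ℝ → ℂ) (hz₁c : ContinuousOn z₁ (Set.Icc 0 ε))
    (hz₁d : ∀ t ∈ Set.Ico 0 ε,
      HasDerivWithinAt z₁ (2 / (z₁ t - (U t : ℂ))) (Set.Ici t) t)
    (w : ℂ) (hw : w ≠ z₁ ε)
    (z₂ : ℝ → ℂ) (hz₂0 : z₂ 0 = w)
    (hz₂d : ∀ t ∈ Set.Ico 0 δ,
      HasDerivWithinAt z₂ (2 / (z₂ t - (U (t + ε) : ℂ))) (Set.Ici t) t)
    (z : ℝ → ℂ) (hzdef : z = fun t => if t < ε then z₁ t else z₂ (t - ε)) :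
    (∀ t ∈ Set.Ico 0 (ε + δ),
      HasDerivWithinAt z (2 / (z t - (U t : ℂ))) (Set.Ici t) t) ∧
    Tendsto z (𝓝[<] ε) (𝓝 (z₁ ε)) ∧
    z ε = w ∧
    ¬ ContinuousWithinAt z (Set.Icc 0 (ε + δ)) ε := by
  subst hzdef
  have hsolution : IsRightSolution (fun t x ↦ 2 / (x - (U t : ℂ)))
      (fun t ↦ if t < ε then z₁ t else z₂ (t - ε)) (Ico 0 (ε + δ)) := by
    have hshift := IsRightSolution.comp_sub_const (F := fun t x ↦ 2 / (x - (U t : ℂ))) ε hz₂d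
    rw [preimage_sub_const_Ico, zero_add, add_comm δ] at hshift
    exact IsRightSolution.piecewise hz₁d hshift
  have hz₁_left : Tendsto z₁ (𝓝[<] ε) (𝓝 (z₁ ε)) :=
    ((continuousWithinAt_Icc_iff_Iic hε).1 (hz₁c ε (right_mem_Icc.2 hε.le))).mono
      Iio_subset_Iic_self
  have hleft_limit : Tendsto (fun t ↦ if t < ε then z₁ t else z₂ (t - ε)) (𝓝[<] ε) (𝓝 (z₁ ε)) :=
    hz₁_left.congr' (eventually_nhdsWithin_of_forall fun t ht ↦ (if_pos ht).symm)
  have hvalue : (if ε < ε then z₁ ε else z₂ (ε - ε)) = w := by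
    rw [if_neg (lt_irrefl ε), sub_self, hz₂0]
  refine ⟨hsolution, hleft_limit, hvalue, fun hcont ↦ hw ?_⟩
  have hcont_left := (continuousWithinAt_Ico_iff_Iio hε).1 <|
    hcont.mono (Ico_subset_Icc_self.trans (Icc_subset_Icc_right (by linarith)))
  exact hvalue ▸ tendsto_nhds_unique hcont_left hleft_limit

/-- Non-uniqueness for the right-derivative form of the chordal Loewner equation:
gluing a solution `z₁` on `[0,ε]` with a solution `z₂` (restarted at an arbitrary
point `w ≠ z₁ ε`) produces a function `z` which solves the equation in the
right-derivative sense at every `t ∈ [0, ε+δ)`, yet is discontinuous at `t = ε`: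
its left limit there is `z₁ ε ≠ w = z ε`. -/
theorem stmt3 (U : ℝ → ℝ) (hU : ContinuousOn U (Set.Ici 0))
    (ε δ : ℝ) (hε : 0 < ε) (hδ : 0 < δ)
    (z₁ : ℝ → ℂ) (hz₁c : ContinuousOn z₁ (Set.Icc 0 ε))
    (hz₁U : ∀ t ∈ Set.Icc 0 ε, z₁ t ≠ (U t : ℂ))
    (hz₁d : ∀ t ∈ Set.Ico 0 ε,
      HasDerivWithinAt z₁ (2 / (z₁ t - (U t : ℂ))) (Set.Ici t) t)
    (w : ℂ) (hw : w ≠ z₁ ε)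
    (z₂ : ℝ → ℂ) (hz₂c : ContinuousOn z₂ (Set.Ico 0 δ)) (hz₂0 : z₂ 0 = w)
    (hz₂U : ∀ t ∈ Set.Ico 0 δ, z₂ t ≠ (U (t + ε) : ℂ))
    (hz₂d : ∀ t ∈ Set.Ico 0 δ,
      HasDerivWithinAt z₂ (2 / (z₂ t - (U (t + ε) : ℂ))) (Set.Ici t) t)
    (z : ℝ → ℂ) (hzdef : z = fun t => if t < ε then z₁ t else z₂ (t - ε)) :
    (∀ t ∈ Set.Ico 0 (ε + δ),
      HasDerivWithinAt z (2 / (z t - (U t : ℂ))) (Set.Ici t) t) ∧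
    Tendsto z (𝓝[<] ε) (𝓝 (z₁ ε)) ∧
    z ε = w ∧
    ¬ ContinuousWithinAt z (Set.Icc 0 (ε + δ)) ε :=
  stmt3_general U ε δ hε hδ z₁ hz₁c hz₁d w hw z₂ hz₂0 hz₂d z hzdef
end

section
/- Let q ∈ (0,1) and θ ∈ ℝ. Then the symmetric partial sums S_N := Σ_{n=−N}^{N} (1 + q^{2n}·q e^{−iθ})/(1 − q^{2n}·q e^{−iθ}) converge to a limit L ∈ ℂ as N → ∞, and Re L = 1. Equivalently, Villat's kernel satisfies Re 𝒦_q(q, e^{iθ}) = 1 for every q ∈ (0,1) and every θ ∈ ℝ. -/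
/-!
With `K w = (1 + w) / (1 - w)` and `w n = q ^ (2n) · q e^{-iθ}`, the points `w (-n-1)` and `w n`
have reciprocal moduli and the same argument, so `w (-n-1) = (conj (w n))⁻¹`, and
`K (conj w)⁻¹ = -conj (K w)`. Writing `A N = ∑_{n<N} (K (w n) - 1)`, the symmetric partial sum is
therefore `1 + A (N+1) - conj (A N)`. Since `w n` decays geometrically, `A N` converges to some `a`,
and the limit `1 + a - conj a` has real part `1`.
-/

open Filter Topology ComplexConjugate

theorem Finset.sum_Icc_neg_natCast {M : Type*} [AddCommMonoid M] (g : ℤ → M) (N : ℕ) :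
    ∑ n ∈ Finset.Icc (-(N : ℤ)) N, g n =
      ∑ n ∈ Finset.range (N + 1), g n + ∑ n ∈ Finset.range N, g (-(n : ℤ) - 1) := by
  induction N with
  | zero => simp
  | succ N ih =>
    have hsplit : Finset.Icc (-((N + 1 : ℕ) : ℤ)) ((N + 1 : ℕ) : ℤ) =
        insert ((N : ℤ) + 1) (insert (-(N : ℤ) - 1) (Finset.Icc (-(N : ℤ)) N)) := by
      ext m; simp only [Finset.mem_Icc, Finset.mem_insert]; omega
    have hnew : -(N : ℤ) - 1 ∉ Finset.Icc (-(N : ℤ)) N := by simp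
    rw [hsplit, Finset.sum_insert (by simp only [Finset.mem_insert, Finset.mem_Icc]; omega),
      Finset.sum_insert hnew, ih,
      Finset.sum_range_succ (fun n : ℕ => g n) (N + 1),
      Finset.sum_range_succ (fun n : ℕ => g (-(n : ℤ) - 1)) N]
    push_cast
    abel

theorem tendsto_sum_Icc_neg_of_conj_antisymm {f : ℤ → ℂ} (hf : ∀ n, f (-n - 1) = -conj (f n))
    {a : ℂ} (ha : HasSum (fun n : ℕ => f n - 1) a) :
    Tendsto (fun N : ℕ => ∑ n ∈ Finset.Icc (-(N : ℤ)) N, f n) atTop (𝓝 (1 + a - conj a)) := by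
  have hpartial : ∀ N : ℕ, ∑ n ∈ Finset.Icc (-(N : ℤ)) N, f n =
      1 + ∑ n ∈ Finset.range (N + 1), (f n - 1) - conj (∑ n ∈ Finset.range N, (f n - 1)) := by
    intro N
    simp only [Finset.sum_Icc_neg_natCast, hf, Finset.sum_neg_distrib, Finset.sum_sub_distrib,
      map_sub, map_sum, Finset.sum_const, Finset.card_range, nsmul_eq_mul, mul_one, map_natCast]
    push_cast
    ring
  simp only [hpartial]
  have hA := ha.tendsto_sum_nat
  exact (tendsto_const_nhds.add (hA.comp (tendsto_add_atTop_nat 1))).sub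
    ((Complex.continuous_conj.tendsto a).comp hA)

theorem cayley_conj_inv {w : ℂ} (hw : w ≠ 0) :
    (1 + (conj w)⁻¹) / (1 - (conj w)⁻¹) = -conj ((1 + w) / (1 - w)) := by
  have hw' : conj w ≠ 0 := by simpa using hw
  rw [← mul_div_mul_left _ _ hw', mul_add, mul_sub, mul_inv_cancel₀ hw', ← neg_sub, div_neg,
    mul_one, add_comm]
  simp

theorem norm_cayley_sub_one_le {w : ℂ} {r : ℝ} (hw : ‖w‖ ≤ r) (hr : r < 1) :
    ‖(1 + w) / (1 - w) - 1‖ ≤ 2 / (1 - r) * ‖w‖ := by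
  have hpos : 0 < 1 - r := by linarith
  have hden : 1 - r ≤ ‖1 - w‖ := by
    calc 1 - r ≤ ‖(1 : ℂ)‖ - ‖w‖ := by rw [norm_one]; linarith
      _ ≤ ‖1 - w‖ := norm_sub_norm_le _ _
  have hne : (1 : ℂ) - w ≠ 0 := norm_pos_iff.mp (hpos.trans_le hden)
  rw [show (1 + w) / (1 - w) - 1 = 2 * w / (1 - w) by field_simp; ring, norm_div, norm_mul,
    div_mul_eq_mul_div, Complex.norm_two]
  gcongr

theorem summable_cayley_geometric_sub_one {c z : ℂ} (hc : ‖c‖ < 1) (hz : ‖z‖ < 1) :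
    Summable fun n : ℕ => (1 + c ^ n * z) / (1 - c ^ n * z) - 1 := by
  refine Summable.of_norm_bounded
    ((summable_geometric_of_lt_one (norm_nonneg _) hc).mul_right ‖z‖ |>.mul_left (2 / (1 - ‖z‖)))
    fun n => ?_
  have hle : ‖c ^ n * z‖ ≤ ‖z‖ := by
    rw [norm_mul, norm_pow]
    exact mul_le_of_le_one_left (norm_nonneg _) (pow_le_one₀ (norm_nonneg _) hc.le)
  simpa [norm_mul, norm_pow] using norm_cayley_sub_one_le hle hz

theorem zpow_neg_sub_one_mul_eq_inv_conj {q : ℝ} (hq : q ≠ 0) {z : ℂ} (hz : ‖z‖ = |q|) (n : ℤ) :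
    (q : ℂ) ^ (2 * (-n - 1)) * z = (conj ((q : ℂ) ^ (2 * n) * z))⁻¹ := by
  have hz0 : z ≠ 0 := by rw [← norm_pos_iff, hz]; positivity
  have hqC : (q : ℂ) ≠ 0 := by exact_mod_cast hq
  have hconj : conj z = (q : ℂ) ^ 2 / z := by
    rw [eq_div_iff hz0, mul_comm, Complex.mul_conj, Complex.normSq_eq_norm_sq, hz, sq_abs]
    push_cast; rfl
  rw [map_mul, map_zpow₀, Complex.conj_ofReal, mul_inv, hconj, inv_div,
    show 2 * (-n - 1) = -(2 * n) - 2 by ring, zpow_sub₀ hqC, zpow_neg]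
  field_simp

/-- Villat's kernel normalization: for `q ∈ (0,1)` and `θ ∈ ℝ`, the symmetric
partial sums `∑_{n=-N}^{N} (1 + q^{2n}·q e^{-iθ})/(1 - q^{2n}·q e^{-iθ})` converge
to a limit `L ∈ ℂ` with `Re L = 1`; i.e., `Re 𝒦_q(q, e^{iθ}) = 1`. -/
theorem stmt8 (q : ℝ) (hq : q ∈ Set.Ioo (0:ℝ) 1) (θ : ℝ) :
    ∃ L : ℂ, Tendsto
      (fun N : ℕ => ∑ n ∈ Finset.Icc (-(N : ℤ)) (N : ℤ),
        (1 + (q : ℂ) ^ (2 * n) * ((q : ℂ) * Complex.exp (-(θ : ℂ) * Complex.I))) /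
          (1 - (q : ℂ) ^ (2 * n) * ((q : ℂ) * Complex.exp (-(θ : ℂ) * Complex.I))))
      atTop (𝓝 L) ∧ L.re = 1 := by
  obtain ⟨hq0, hq1⟩ := hq
  set z : ℂ := (q : ℂ) * Complex.exp (-(θ : ℂ) * Complex.I)
  have hz : ‖z‖ = |q| := by simp [z, Complex.norm_exp]
  have hz1 : ‖z‖ < 1 := by rwa [hz, abs_of_pos hq0]
  have hz0 : z ≠ 0 := norm_ne_zero_iff.mp (by rw [hz]; exact (abs_pos.mpr hq0.ne').ne')
  have hsymm : ∀ n : ℤ, (1 + (q : ℂ) ^ (2 * (-n - 1)) * z) / (1 - (q : ℂ) ^ (2 * (-n - 1)) * z) =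
      -conj ((1 + (q : ℂ) ^ (2 * n) * z) / (1 - (q : ℂ) ^ (2 * n) * z)) := fun n => by
    rw [zpow_neg_sub_one_mul_eq_inv_conj hq0.ne' hz n,
      cayley_conj_inv (mul_ne_zero (zpow_ne_zero _ (mod_cast hq0.ne')) hz0)]
  have hsummable : Summable fun n : ℕ =>
      (1 + (q : ℂ) ^ (2 * (n : ℤ)) * z) / (1 - (q : ℂ) ^ (2 * (n : ℤ)) * z) - 1 := by
    simp only [zpow_mul, zpow_natCast, zpow_ofNat]
    refine summable_cayley_geometric_sub_one ?_ hz1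
    rw [norm_pow, Complex.norm_real, Real.norm_of_nonneg hq0.le]
    exact pow_lt_one₀ hq0.le hq1 two_ne_zero
  exact ⟨_, tendsto_sum_Icc_neg_of_conj_antisymm hsymm hsummable.hasSum, by simp⟩
end
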